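/- arXiv:1708.08723 — 3 statements merged into one kernel-verified Lean document; each statement's English description precedes it below -/
import Mathlib

section
/- Every graph admitting an outer k-planar drawing has a vertex of degree at most √(4k+1) + 1; equivalently, the minimum degree of an outer k-planar graph is at most ⌊√(4k+1)⌋ + 1. -/
open Finset

open scoped Classical

/-- Two chords `{a,b}` and `{c,d}` on points in convex position (labeled by `Fin n`
in cyclic order) cross iff their endpoints interleave. -/
def Interleave {n : ℕ} (a b c d : Fin n) : Prop :=
  (min a b < min c d ∧ min c d < max a b ∧ max a b < max c d) ∨
  (min c d < min a b ∧ min a b < max c d ∧ max c d < max a b)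

/-- Crossing of chords, as unordered pairs. -/
def Sym2Cross {n : ℕ} (e f : Sym2 (Fin n)) : Prop :=
  ∃ a b c d : Fin n, e = s(a, b) ∧ f = s(c, d) ∧ Interleave a b c d

/-- A graph is outer `k`-planar if its vertices can be placed in convex (cyclic)
position so that every edge is crossed by at most `k` other edges. -/
def IsOuterKPlanar {V : Type*} [Fintype V] [DecidableEq V] (k : ℕ) (G : SimpleGraph V) : Prop :=
  ∃ σ : V ≃ Fin (Fintype.card V),
    ∀ e ∈ G.edgeFinset,
      (G.edgeFinset.filter (fun f => f ≠ e ∧ Sym2Cross (e.map σ) (f.map σ))).card ≤ k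

/-- A graph is outer `k`-quasi-planar if its vertices can be placed in convex
position so that no `k` edges pairwise cross. -/
def IsOuterKQuasiPlanar {V : Type*} [Fintype V] [DecidableEq V] (k : ℕ) (G : SimpleGraph V) : Prop :=
  ∃ σ : V ≃ Fin (Fintype.card V),
    ∀ S : Finset (Sym2 V), ↑S ⊆ G.edgeSet →
      (∀ e ∈ S, ∀ f ∈ S, e ≠ f → Sym2Cross (e.map σ) (f.map σ)) → S.card < k

/-!
Suppose every vertex has degree at least `d + 2`, where `d = ⌊√(4k+1)⌋`, and put `h = ⌈d/2⌉`,
so that `k < h (d + 1 - h)`. Number the vertices along the convex position. A vertex has more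
than `2h` neighbours, so some edge `xy` with `x < y` has span `y - x > h`; take one of minimal
span. Every other edge inside `[x, y]` then has span at most `h`, whereas every edge from the
`a ≥ h` vertices strictly between `x` and `y` to a vertex outside `[x, y]` crosses `xy`, so there
are at most `k` of those. Summing degrees over the vertices strictly between `x` and `y` gives
`a (d + 2) ≤ k + 2ah - h² + h`, which contradicts `k < h (d + 1 - h)` as `a ≥ h`, `2h ≤ d + 1`.
-/

open SimpleGraph

lemma two_mul_sum_range_min_add {h m : ℕ} (hm : h ≤ m) :
    2 * ∑ j ∈ range m, min j h + h * (h + 1) = 2 * m * h := by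
  induction m, hm using Nat.le_induction with
  | base =>
    have hsum : ∑ j ∈ range h, min j h = ∑ j ∈ range h, j :=
      sum_congr rfl fun j hj => min_eq_left (mem_range.1 hj).le
    have hgauss := sum_range_id_mul_two h
    rw [hsum]
    cases h with
    | zero => simp
    | succ h => simp only [Nat.add_sub_cancel] at hgauss; nlinarith
  | succ m hm ih =>
    rw [sum_range_succ, min_eq_right hm]
    linarith

lemma sum_Ioo_min_add_min_add_le {x y h : ℕ} (hxy : x + h ≤ y) :
    ∑ i ∈ Ioo x y, (min (i - x) h + min (y - i) h) + h * (h + 1) ≤ 2 * (y - x) * h := by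
  have hleft : ∑ i ∈ Ioo x y, min (i - x) h ≤ ∑ j ∈ range (y - x), min j h := by
    calc ∑ i ∈ Ioo x y, min (i - x) h ≤ ∑ i ∈ Ico x y, min (i - x) h :=
          sum_le_sum_of_subset Ioo_subset_Ico_self
      _ = ∑ j ∈ range (y - x), min j h := by simp [sum_Ico_eq_sum_range]
  have hright : ∑ i ∈ Ioo x y, min (y - i) h ≤ ∑ j ∈ range (y - x), min j h := by
    calc ∑ i ∈ Ioo x y, min (y - i) h ≤ ∑ i ∈ Ico (x + 1) (y + 1), min (y - i) h :=
          sum_le_sum_of_subset fun i hi => by simp only [mem_Ioo, mem_Ico] at hi ⊢; omega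
      _ = ∑ j ∈ range (y - x), min (y - x - 1 - j) h := by
          rw [sum_Ico_eq_sum_range]
          refine sum_congr (by congr 1; omega) fun j _ => by congr 1; omega
      _ = ∑ j ∈ range (y - x), min j h := sum_range_reflect (fun j => min j h) _
  have := two_mul_sum_range_min_add (show h ≤ y - x by omega)
  rw [sum_add_distrib]
  omega

lemma add_one_add_mul_le_of_lt_mul_self {k m : ℕ} (hk : 4 * k + 1 < m * m) :
    k + 1 + m / 2 * (m / 2) ≤ m / 2 * m := by
  obtain ⟨h, rfl | rfl⟩ := Nat.even_or_odd' m
  · rw [Nat.mul_div_cancel_left h two_pos] at *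
    nlinarith
  · rw [show (2 * h + 1) / 2 = h by omega] at *
    nlinarith

lemma SimpleGraph.sum_card_neighborFinset_inter {α : Type*} [Fintype α] [DecidableEq α]
    (G : SimpleGraph α) [DecidableRel G.Adj] (s t : Finset α) :
    ∑ v ∈ s, #(G.neighborFinset v ∩ t) = #(G.interedges s t) := by
  rw [interedges_def, card_filter, sum_product]
  refine sum_congr rfl fun v _ => ?_
  rw [← card_filter]
  congr 1
  ext w
  simp [and_comm]

lemma SimpleGraph.degree_comap_equiv {V W : Type*} [Fintype V] [Fintype W] (G : SimpleGraph W)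
    [DecidableRel G.Adj] (e : V ≃ W) [DecidableRel (G.comap e).Adj] (v : V) :
    (G.comap e).degree v = G.degree (e v) := by
  rw [← card_neighborSet_eq_degree, ← card_neighborSet_eq_degree]
  exact Fintype.card_congr (e.subtypeEquiv fun _ => Iff.rfl)

section ConvexPosition

variable {n : ℕ}

lemma sym2Cross_of_mem_Ioo_of_notMem_Icc {x y w w' : Fin n} (hw : w ∈ Ioo x y)
    (hw' : w' ∉ Icc x y) : Sym2Cross s(x, y) s(w, w') := by
  refine ⟨x, y, w, w', rfl, rfl, ?_⟩
  simp only [mem_Ioo, mem_Icc, not_and_or, not_le] at hw hw'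
  unfold Interleave
  simp only [min_def, max_def]
  split_ifs <;> omega

lemma card_le_of_forall_val_mem_Ico {s : Finset (Fin n)} {a b : ℕ}
    (hs : ∀ j ∈ s, (j : ℕ) ∈ Ico a b) : #s ≤ b - a := by
  simpa using card_le_card_of_injOn Fin.val hs Fin.val_injective.injOn

lemma card_le_min_add_min_of_near {s : Finset (Fin n)} {i : Fin n} {lo hi h : ℕ} (his : i ∉ s)
    (hs : ∀ j ∈ s, lo ≤ j ∧ (j : ℕ) ≤ hi ∧ (j : ℕ) ≤ i + h ∧ (i : ℕ) ≤ j + h) :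
    #s ≤ min (i - lo) h + min (hi - i) h := by
  rw [← card_filter_add_card_filter_not (· < i)]
  have hlt : ∀ j ∈ s.filter (· < i), lo ≤ j ∧ (i : ℕ) ≤ j + h ∧ j < i := fun j hj => by
    rw [mem_filter] at hj; have := hs j hj.1; omega
  have hgt : ∀ j ∈ s.filter (¬ · < i), (j : ℕ) ≤ hi ∧ (j : ℕ) ≤ i + h ∧ i < j := fun j hj => by
    rw [mem_filter] at hj
    have := hs j hj.1
    have : j ≠ i := fun hji => his (hji ▸ hj.1)
    omega
  gcongr <;> refine le_min ?_ ?_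
  · exact (card_le_of_forall_val_mem_Ico (a := lo) (b := i) fun j hj => by
      have := hlt j hj; rw [mem_Ico]; omega)
  · exact (card_le_of_forall_val_mem_Ico (a := i - h) (b := i) fun j hj => by
      have := hlt j hj; rw [mem_Ico]; omega).trans (by omega)
  · exact (card_le_of_forall_val_mem_Ico (a := i + 1) (b := hi + 1) fun j hj => by
      have := hgt j hj; rw [mem_Ico]; omega).trans (by omega)
  · exact (card_le_of_forall_val_mem_Ico (a := i + 1) (b := i + h + 1) fun j hj => by
      have := hgt j hj; rw [mem_Ico]; omega).trans (by omega)

variable (H : SimpleGraph (Fin n)) [DecidableRel H.Adj]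

lemma exists_adj_add_lt_of_two_mul_lt_degree {h : ℕ} {i : Fin n} (hi : 2 * h < H.degree i) :
    ∃ x y, H.Adj x y ∧ (x : ℕ) + h < y := by
  by_contra! hnear
  have := card_le_min_add_min_of_near (s := H.neighborFinset i) (i := i) (lo := 0) (hi := n)
    (h := h) (by simp) fun j hj => by
      rw [mem_neighborFinset] at hj
      have := hnear i j hj
      have := hnear j i hj.symm
      omega
  rw [card_neighborFinset_eq_degree] at this
  omega

lemma exists_adj_add_lt_inner_adj_near {h : ℕ} (hlong : ∃ x y, H.Adj x y ∧ (x : ℕ) + h < y) :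
    ∃ x y, H.Adj x y ∧ (x : ℕ) + h < y ∧
      ∀ w ∈ Ioo x y, ∀ w' ∈ Icc x y, H.Adj w w' → (w' : ℕ) ≤ w + h ∧ (w : ℕ) ≤ w' + h := by
  obtain ⟨⟨x, y⟩, hmem, hmin⟩ :=
    exists_min_image {p : Fin n × Fin n | H.Adj p.1 p.2 ∧ (p.1 : ℕ) + h < p.2}
      (fun p => (p.2 : ℕ) - p.1)
      (by obtain ⟨x, y, hxy⟩ := hlong; exact ⟨(x, y), by simpa using hxy⟩)
  simp only [mem_filter, mem_univ, true_and] at hmem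
  refine ⟨x, y, hmem.1, hmem.2, fun w hw w' hw' hadj => ?_⟩
  simp only [mem_Ioo, mem_Icc] at hw hw'
  constructor <;> by_contra! hfar
  · have := hmin (w, w') (by simp [hadj, hfar])
    dsimp only at this
    omega
  · have := hmin (w', w) (by simp [hadj.symm, hfar])
    dsimp only at this
    omega

theorem exists_degree_le_sqrt_of_card_interedges_le [NeZero n] {k : ℕ}
    (hcross : ∀ x y, H.Adj x y → #(H.interedges (Ioo x y) (Icc x y)ᶜ) ≤ k) :
    ∃ i, H.degree i ≤ Nat.sqrt (4 * k + 1) + 1 := by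
  by_contra! hdeg
  set d := Nat.sqrt (4 * k + 1)
  set h := (d + 1) / 2
  have hk : k + 1 + h * h ≤ h * (d + 1) := add_one_add_mul_le_of_lt_mul_self (Nat.lt_succ_sqrt _)
  have hh : 2 * h ≤ d + 1 := Nat.mul_div_le (d + 1) 2
  obtain ⟨x, y, hxy, hlong, hnear⟩ := exists_adj_add_lt_inner_adj_near H
    (exists_adj_add_lt_of_two_mul_lt_degree H (h := h) (i := 0) (by have := hdeg 0; omega))
  have hinner (w) (hw : w ∈ Ioo x y) :
      #(H.neighborFinset w ∩ Icc x y) ≤ min ((w : ℕ) - x) h + min ((y : ℕ) - w) h :=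
    card_le_min_add_min_of_near (by simp) fun j hj => by
      rw [mem_inter, mem_neighborFinset] at hj
      have := hnear w hw j hj.2 hj.1
      rw [mem_Icc] at hj
      omega
  have hupper : ∑ w ∈ Ioo x y, H.degree w ≤
      ∑ i ∈ Ioo (x : ℕ) y, (min (i - x) h + min (y - i) h) + k :=
    calc ∑ w ∈ Ioo x y, H.degree w
        = ∑ w ∈ Ioo x y, #(H.neighborFinset w ∩ Icc x y) +
            ∑ w ∈ Ioo x y, #(H.neighborFinset w ∩ (Icc x y)ᶜ) := by
          rw [← sum_add_distrib]
          refine sum_congr rfl fun w _ => ?_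
          rw [← card_neighborFinset_eq_degree, ← card_inter_add_card_sdiff _ (Icc x y),
            sdiff_eq_inter_compl]
      _ ≤ ∑ w ∈ Ioo x y, (min ((w : ℕ) - x) h + min ((y : ℕ) - w) h) + k := by
          rw [sum_card_neighborFinset_inter _ _ (Icc x y)ᶜ]
          exact add_le_add (sum_le_sum hinner) (hcross x y hxy)
      _ = ∑ i ∈ Ioo (x : ℕ) y, (min (i - x) h + min (y - i) h) + k := by
          rw [← Fin.map_valEmbedding_Ioo, sum_map]
          rfl
  have hlower : #(Ioo x y) * (d + 2) ≤ ∑ w ∈ Ioo x y, H.degree w := by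
    simpa using card_nsmul_le_sum (Ioo x y) _ (d + 2) fun w _ => hdeg w
  have hsum := sum_Ioo_min_add_min_add_le (show (x : ℕ) + h ≤ y by omega)
  rw [Fin.card_Ioo] at hlower
  obtain ⟨b, hb⟩ : ∃ b, (y : ℕ) - x = h + b + 1 := ⟨(y : ℕ) - x - h - 1, by omega⟩
  obtain ⟨c, hc⟩ : ∃ c, d + 1 = 2 * h + c := ⟨d + 1 - 2 * h, by omega⟩
  rw [hb, Nat.add_sub_cancel, show d + 2 = 2 * h + c + 1 by omega] at hlower
  rw [hb] at hsum
  rw [hc] at hk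
  nlinarith

end ConvexPosition

lemma IsOuterKPlanar.exists_equiv_card_interedges_le {V : Type*} [Fintype V] [DecidableEq V]
    {k : ℕ} {G : SimpleGraph V} [DecidableRel G.Adj] (h : IsOuterKPlanar k G) :
    ∃ σ : V ≃ Fin (Fintype.card V), ∀ x y, (G.comap σ.symm).Adj x y →
      #((G.comap σ.symm).interedges (Ioo x y) (Icc x y)ᶜ) ≤ k := by
  obtain ⟨σ, hσ⟩ := h
  refine ⟨σ, fun x y hxy => (card_le_card_of_injOn (fun p => s(σ.symm p.1, σ.symm p.2)) ?_ ?_).trans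
    (hσ s(σ.symm x, σ.symm y) (by simpa using hxy))⟩
  · rintro ⟨w, w'⟩ hp
    rw [mem_coe, mk_mem_interedges_iff] at hp
    obtain ⟨hw, hw', hadj⟩ := hp
    have hcross := sym2Cross_of_mem_Ioo_of_notMem_Icc hw (mem_compl.1 hw')
    rw [mem_Ioo] at hw
    simp only [coe_filter, mem_edgeFinset, Set.mem_ofPred_eq, mem_edgeSet, Sym2.map_mk,
      Equiv.apply_symm_apply]
    exact ⟨hadj, by simp [hw.1.ne', hw.2.ne], hcross⟩
  · rintro ⟨w, w'⟩ hp ⟨u, u'⟩ hq heq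
    simp only [mem_coe, mk_mem_interedges_iff, mem_compl] at hp hq
    simp only [Sym2.eq_iff, σ.symm.injective.eq_iff] at heq
    rcases heq with ⟨rfl, rfl⟩ | ⟨rfl, rfl⟩
    · rfl
    · exact absurd (Ioo_subset_Icc_self hp.1) hq.2.1

/-- Every graph admitting an outer `k`-planar drawing has a vertex of degree at
most `⌊√(4k+1)⌋ + 1`. -/
theorem stmt4 (k : ℕ) {V : Type*} [Fintype V] [DecidableEq V] [Nonempty V]
    (G : SimpleGraph V) [DecidableRel G.Adj] (h : IsOuterKPlanar k G) :
    ∃ v : V, G.degree v ≤ Nat.sqrt (4 * k + 1) + 1 := by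
  obtain ⟨σ, hσ⟩ := h.exists_equiv_card_interedges_le
  have : NeZero (Fintype.card V) := ⟨Fintype.card_ne_zero⟩
  obtain ⟨i, hi⟩ := exists_degree_le_sqrt_of_card_interedges_le _ hσ
  exact ⟨σ.symm i, by rwa [← degree_comap_equiv]⟩
end

section
/- Every graph admitting an outer k-planar drawing has chromatic number at most ⌊√(4k+1)⌋ + 2, and this bound is tight: the complete graph on ⌊√(4k+1)⌋ + 2 vertices is outer k-planar. -/
/-!
Let `s = ⌊√(4k+1)⌋` and suppose every vertex of a convex drawing has degree at least `s + 2`.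
Put `m = ⌈s/2⌉` and, among the edges spanning more than `m` positions along the shorter side of
the circle, take a shortest one `ab`, of span `g`. A vertex at distance `j` from `a` on that side
has at most `min j m + min (g - j) m` neighbours on it (a longer chord there would contradict the
choice of `ab`), so each of its other neighbours gives its own edge crossing `ab`. Summing over
the side, `ab` is crossed more than `k` times. Hence outer `k`-planar graphs are
`(s + 1)`-degenerate and `(s + 2)`-colourable. Conversely, an edge of the convex `K_{s+2}` with
`x` and `y` vertices on its two sides is crossed `x * y ≤ s² / 4 ≤ k` times.
-/

open Finset

open scoped Classical

namespace Nat

lemma two_mul_sum_Icc_min_add_mul_self {m i : ℕ} (hm : m ≤ i) :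
    2 * ∑ j ∈ Icc 1 i, min j m + m * m = 2 * i * m + m := by
  induction i, hm using Nat.le_induction with
  | base =>
    suffices ∀ l ≤ m, 2 * ∑ j ∈ Icc 1 l, min j m = l * (l + 1) by rw [this m le_rfl]; ring
    intro l hl
    induction l with
    | zero => simp
    | succ l ih =>
      rw [Finset.sum_Icc_succ_top (by omega), mul_add, ih (by omega), min_eq_left hl]
      ring
  | succ i hi ih =>
    rw [Finset.sum_Icc_succ_top (by omega), min_eq_right (by omega)]
    linarith

lemma sum_Icc_min_add_min_add_mul_self {m g : ℕ} (hm : m < g) :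
    ∑ j ∈ Icc 1 (g - 1), (min j m + min (g - j) m) + m * m = 2 * (g - 1) * m + m := by
  have hreflect : ∑ j ∈ Icc 1 (g - 1), min (g - j) m = ∑ j ∈ Icc 1 (g - 1), min j m :=
    Finset.sum_nbij' (fun j => g - j) (fun j => g - j)
      (fun j hj => by simp only [Finset.mem_Icc] at hj ⊢; omega)
      (fun j hj => by simp only [Finset.mem_Icc] at hj ⊢; omega)
      (fun j hj => by simp only [Finset.mem_Icc] at hj; omega)
      (fun j hj => by simp only [Finset.mem_Icc] at hj; omega)
      (fun _ _ => rfl)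
  rw [Finset.sum_add_distrib, hreflect, ← two_mul]
  exact two_mul_sum_Icc_min_add_mul_self (by omega)

lemma lt_div_two_mul_sub_div_two {k N : ℕ} (h : 4 * k + 1 < N * N) : k < N / 2 * (N - N / 2) := by
  obtain ⟨q, rfl | rfl⟩ := Nat.even_or_odd' N
  · rw [show 2 * q / 2 = q by omega, show 2 * q - q = q by omega]
    nlinarith
  · rw [show (2 * q + 1) / 2 = q by omega, show 2 * q + 1 - q = q + 1 by omega]
    nlinarith

lemma mul_le_of_add_le_sqrt {k x y : ℕ} (h : x + y ≤ Nat.sqrt (4 * k + 1)) : x * y ≤ k := by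
  have hsq : (x + y) * (x + y) ≤ 4 * k + 1 := (Nat.mul_self_le_mul_self h).trans (Nat.sqrt_le _)
  have hamgm : 4 * (x * y) ≤ (x + y) * (x + y) := by nlinarith [sq_nonneg ((x : ℤ) - y)]
  omega

end Nat

section Chords

variable {n N : ℕ}

lemma interleave_iff_val {a b c d : Fin n} : Interleave a b c d ↔
    ((min a.val b.val < min c.val d.val ∧ min c.val d.val < max a.val b.val ∧
      max a.val b.val < max c.val d.val) ∨
     (min c.val d.val < min a.val b.val ∧ min a.val b.val < max c.val d.val ∧
      max c.val d.val < max a.val b.val)) := by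
  simp only [Interleave, Fin.lt_def, Fin.coe_min, Fin.coe_max]

lemma sym2Cross_mk_iff {a b c d : Fin n} : Sym2Cross s(a, b) s(c, d) ↔ Interleave a b c d := by
  refine ⟨?_, fun h => ⟨a, b, c, d, rfl, rfl, h⟩⟩
  rintro ⟨a', b', c', d', h₁, h₂, h⟩
  rw [Sym2.eq_iff] at h₁ h₂
  rw [interleave_iff_val] at h ⊢
  rcases h₁ with ⟨rfl, rfl⟩ | ⟨rfl, rfl⟩ <;>
    rcases h₂ with ⟨rfl, rfl⟩ | ⟨rfl, rfl⟩ <;> omega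

lemma Sym2Cross.ne {e f : Sym2 (Fin n)} (h : Sym2Cross e f) : e ≠ f := by
  rintro rfl
  obtain ⟨a, b, c, d, he, hf, hint⟩ := h
  rw [he, Sym2.eq_iff] at hf
  rw [interleave_iff_val] at hint
  rcases hf with ⟨rfl, rfl⟩ | ⟨rfl, rfl⟩ <;> omega

lemma sym2Cross_map_iff {φ : Fin n → Fin N} (hφ : StrictMono φ) (e f : Sym2 (Fin n)) :
    Sym2Cross (e.map φ) (f.map φ) ↔ Sym2Cross e f := by
  induction e using Sym2.ind with | _ a b =>
  induction f using Sym2.ind with | _ c d =>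
  simp only [Sym2.map_mk, sym2Cross_mk_iff, Interleave, ← hφ.monotone.map_min,
    ← hφ.monotone.map_max, hφ.lt_iff_lt]

end Chords

namespace SimpleGraph

variable {n m : ℕ}

noncomputable def crossingEdges (G : SimpleGraph (Fin n)) (e : Sym2 (Fin n)) :
    Finset (Sym2 (Fin n)) :=
  G.edgeFinset.filter (fun f => f ≠ e ∧ Sym2Cross e f)

def CrossingBounded (k : ℕ) (G : SimpleGraph (Fin n)) : Prop :=
  ∀ e ∈ G.edgeFinset, #(G.crossingEdges e) ≤ k

lemma isOuterKPlanar_iff {V : Type*} [Fintype V] [DecidableEq V] {k : ℕ} {G : SimpleGraph V} :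
    IsOuterKPlanar k G ↔
      ∃ σ : V ≃ Fin (Fintype.card V), (G.map σ.toEmbedding).CrossingBounded k := by
  refine exists_congr fun σ => ?_
  -- for any instance, as `CrossingBounded` uses the classical one rather than `edgeFinset_map`'s
  have hE : ∀ [Fintype (G.map σ.toEmbedding).edgeSet],
      (G.map σ.toEmbedding).edgeFinset = G.edgeFinset.map σ.toEmbedding.sym2Map := by
    intro _
    rw [← Finset.coe_inj]
    push_cast
    exact G.edgeSet_map _
  simp only [CrossingBounded, crossingEdges, hE]
  simp only [Finset.forall_mem_map, Finset.filter_map, Finset.card_map, Function.comp_def,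
    Function.Embedding.sym2Map_apply, Equiv.coe_toEmbedding, ne_eq,
    (Sym2.map.injective σ.injective).eq_iff]

lemma CrossingBounded.comap {k : ℕ} {G : SimpleGraph (Fin n)} (hG : G.CrossingBounded k)
    {φ : Fin m → Fin n} (hφ : StrictMono φ) : (G.comap φ).CrossingBounded k := by
  have hmap : ∀ f, f ∈ (G.comap φ).edgeFinset → f.map φ ∈ G.edgeFinset := by
    intro f
    induction f using Sym2.ind with | _ x y => simp
  intro e he
  refine (Finset.card_le_card_of_injOn (Sym2.map φ) ?_ ?_).trans (hG _ (hmap e he))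
  · intro f hf
    simp only [crossingEdges, Finset.coe_filter, Set.mem_ofPred_eq] at hf ⊢
    exact ⟨hmap f hf.1, fun h => hf.2.1 (Sym2.map.injective hφ.injective h),
      (sym2Cross_map_iff hφ e f).mpr hf.2.2⟩
  · exact (Sym2.map.injective hφ.injective).injOn

end SimpleGraph

namespace Fin

variable {n : ℕ}

def arcLen (a b : Fin n) : ℕ := (b.val + n - a.val) % n

def chordLen (a b : Fin n) : ℕ := min (a.arcLen b) (b.arcLen a)

def arcPoint (a : Fin n) (j : ℕ) : Fin n := ⟨(a.val + j) % n, Nat.mod_lt _ a.pos⟩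

lemma arcLen_eq_ite (a b : Fin n) :
    a.arcLen b = if a.val ≤ b.val then b.val - a.val else b.val + n - a.val := by
  have ha := a.isLt
  have hb := b.isLt
  unfold arcLen
  split
  · rw [show b.val + n - a.val = (b.val - a.val) + n by omega, Nat.add_mod_right,
      Nat.mod_eq_of_lt (by omega)]
  · rw [Nat.mod_eq_of_lt (by omega)]

lemma arcLen_lt (a b : Fin n) : a.arcLen b < n := Nat.mod_lt _ a.pos

lemma arcLen_pos {a b : Fin n} (h : a ≠ b) : 0 < a.arcLen b := by
  have := Fin.val_ne_of_ne h
  rw [arcLen_eq_ite]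
  split <;> omega

lemma arcLen_add_arcLen {a b : Fin n} (h : a ≠ b) : a.arcLen b + b.arcLen a = n := by
  have := Fin.val_ne_of_ne h
  have ha := a.isLt
  have hb := b.isLt
  rw [arcLen_eq_ite, arcLen_eq_ite]
  split <;> split <;> omega

lemma arcPoint_val (a : Fin n) {j : ℕ} (hj : j < n) :
    (a.arcPoint j).val = if a.val + j < n then a.val + j else a.val + j - n := by
  have ha := a.isLt
  change (a.val + j) % n = _
  split
  · exact Nat.mod_eq_of_lt ‹_›
  · rw [Nat.mod_eq_sub_mod (by omega), Nat.mod_eq_of_lt (by omega)]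

lemma arcLen_arcPoint_arcPoint (a : Fin n) {x y : ℕ} (hx : x < n) (hy : y < n) :
    (a.arcPoint x).arcLen (a.arcPoint y) = if x ≤ y then y - x else y + n - x := by
  have ha := a.isLt
  rw [arcLen_eq_ite, arcPoint_val a hx, arcPoint_val a hy]
  split_ifs <;> omega

lemma arcLen_arcPoint (a : Fin n) {j : ℕ} (hj : j < n) : a.arcLen (a.arcPoint j) = j := by
  have ha := a.isLt
  rw [arcLen_eq_ite, arcPoint_val a hj]
  split_ifs <;> omega

lemma arcPoint_arcLen (a b : Fin n) : a.arcPoint (a.arcLen b) = b := by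
  have ha := a.isLt
  have hb := b.isLt
  ext
  rw [arcPoint_val a (arcLen_lt a b), arcLen_eq_ite]
  split_ifs <;> omega

lemma arcLen_injective (a : Fin n) : Function.Injective a.arcLen := fun x y h => by
  rw [← a.arcPoint_arcLen x, ← a.arcPoint_arcLen y, h]

lemma sym2Cross_of_arcLen_lt {a b c d : Fin n} (hac : 0 < a.arcLen c)
    (hcb : a.arcLen c < a.arcLen b) (hbd : a.arcLen b < a.arcLen d) :
    Sym2Cross s(a, b) s(c, d) := by
  rw [sym2Cross_mk_iff, interleave_iff_val]
  have ha := a.isLt; have hb := b.isLt; have hc := c.isLt; have hd := d.isLt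
  simp only [arcLen_eq_ite] at hac hcb hbd
  split_ifs at hac hcb hbd <;> omega

lemma arcLen_lt_of_sym2Cross {a b c d : Fin n} (h : Sym2Cross s(a, b) s(c, d)) :
    a.arcLen b < a.arcLen c ∨ a.arcLen b < a.arcLen d := by
  rw [sym2Cross_mk_iff, interleave_iff_val] at h
  have ha := a.isLt; have hb := b.isLt; have hc := c.isLt; have hd := d.isLt
  rw [arcLen_eq_ite, arcLen_eq_ite, arcLen_eq_ite]
  split_ifs <;> omega

end Fin

namespace SimpleGraph

theorem colorable_of_forall_exists_card_adj_lt {V : Type*} [Fintype V] (G : SimpleGraph V)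
    (c : ℕ) (h : ∀ s : Finset V, s.Nonempty → ∃ v ∈ s, #{w ∈ s | G.Adj v w} < c) :
    G.Colorable c := by
  rcases isEmpty_or_nonempty V with hV | hV
  · exact .of_isEmpty c
  obtain ⟨_, _, hc⟩ := h Finset.univ Finset.univ_nonempty
  suffices ∀ s : Finset V, ∃ f : V → Fin c, ∀ v ∈ s, ∀ w ∈ s,
      G.Adj v w → f v ≠ f w by
    obtain ⟨f, hf⟩ := this Finset.univ
    exact ⟨Coloring.mk f fun hvw => hf _ (Finset.mem_univ _) _ (Finset.mem_univ _) hvw⟩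
  intro s
  induction s using Finset.strongInduction with | H s ih =>
  rcases s.eq_empty_or_nonempty with rfl | hs
  · exact ⟨fun _ => ⟨0, by omega⟩, by simp⟩
  obtain ⟨v, hv, hdeg⟩ := h s hs
  obtain ⟨f, hf⟩ := ih (s.erase v) (Finset.erase_ssubset hv)
  obtain ⟨col, -, hcol⟩ := Finset.exists_mem_notMem_of_card_lt_card
    (s := {w ∈ s | G.Adj v w}.image f) (t := Finset.univ)
    ((Finset.card_image_le).trans_lt (by simpa using hdeg))
  have hfree : ∀ w ∈ s, G.Adj v w → col ≠ f w := fun w hw hvw hcw =>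
    hcol (Finset.mem_image.mpr ⟨w, Finset.mem_filter.mpr ⟨hw, hvw⟩, hcw.symm⟩)
  refine ⟨Function.update f v col, fun x hx y hy hxy => ?_⟩
  rcases eq_or_ne x v with rfl | hxv
  · rw [Function.update_self, Function.update_of_ne hxy.ne']
    exact hfree y hy hxy
  rcases eq_or_ne y v with rfl | hyv
  · rw [Function.update_self, Function.update_of_ne hxv]
    exact (hfree x hx hxy.symm).symm
  rw [Function.update_of_ne hxv, Function.update_of_ne hyv]
  exact hf x (Finset.mem_erase.mpr ⟨hxv, hx⟩) y (Finset.mem_erase.mpr ⟨hyv, hy⟩) hxy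

section Counting

open Fin

variable {n k m : ℕ} {G : SimpleGraph (Fin n)} {a b : Fin n}

def IsShortestLongChord (G : SimpleGraph (Fin n)) (m : ℕ) (a b : Fin n) : Prop :=
  G.Adj a b ∧ m < a.arcLen b ∧ a.arcLen b ≤ b.arcLen a ∧
    ∀ c d, G.Adj c d → m < c.chordLen d → a.arcLen b ≤ c.chordLen d

lemma IsShortestLongChord.card_neighbor_inside_le (h : G.IsShortestLongChord m a b) {j : ℕ}
    (hj : 0 < j) (hjb : j < a.arcLen b) :
    #{z ∈ G.neighborFinset (a.arcPoint j) | a.arcLen z ≤ a.arcLen b} ≤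
      min j m + min (a.arcLen b - j) m := by
  obtain ⟨hab, -, hshort, hmin⟩ := h
  set g := a.arcLen b
  have hn : g + b.arcLen a = n := arcLen_add_arcLen hab.ne
  have hjn : j < n := by omega
  have hmaps : ∀ z ∈ {z ∈ G.neighborFinset (a.arcPoint j) | a.arcLen z ≤ g},
      a.arcLen z ∈ Icc (j - m) (j - 1) ∪ Icc (j + 1) (min (j + m) g) := by
    intro z hz
    rw [Finset.mem_filter, mem_neighborFinset] at hz
    obtain ⟨hadj, hzg⟩ := hz
    set p := a.arcLen z
    have hpn : p < n := arcLen_lt a z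
    have hpj : p ≠ j := fun hpj => hadj.ne (by rw [← a.arcPoint_arcLen z, ← hpj])
    -- the chord from `arcPoint a j` to `z` lies inside the short side of `ab`, so it is shorter
    have hlen := hmin _ _ hadj
    rw [chordLen, ← a.arcPoint_arcLen z, arcLen_arcPoint_arcPoint a hjn hpn,
      arcLen_arcPoint_arcPoint a hpn hjn] at hlen
    simp only [Finset.mem_union, Finset.mem_Icc]
    split_ifs at hlen <;> omega
  calc _ ≤ #(Icc (j - m) (j - 1) ∪ Icc (j + 1) (min (j + m) g)) :=
        Finset.card_le_card_of_injOn _ hmaps (a.arcLen_injective.injOn)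
    _ ≤ _ := (Finset.card_union_le _ _).trans (by simp only [Nat.card_Icc]; omega)

lemma card_neighbor_outside_le {j : ℕ} (hj : 0 < j) (hjb : j < a.arcLen b) :
    #{z ∈ G.neighborFinset (a.arcPoint j) | a.arcLen b < a.arcLen z} ≤
      #{e ∈ G.crossingEdges s(a, b) | a.arcPoint j ∈ e} := by
  have hjn : j < n := (hjb.trans (arcLen_lt a b))
  refine Finset.card_le_card_of_injOn (fun z => s(a.arcPoint j, z)) (fun z hz => ?_)
    (fun z₁ _ z₂ _ h => Sym2.congr_right.mp h)
  rw [Finset.mem_coe, Finset.mem_filter, mem_neighborFinset] at hz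
  have hcross : Sym2Cross s(a, b) s(a.arcPoint j, z) :=
    sym2Cross_of_arcLen_lt (by rwa [arcLen_arcPoint a hjn]) (by rwa [arcLen_arcPoint a hjn]) hz.2
  exact Finset.mem_filter.mpr ⟨Finset.mem_filter.mpr ⟨mem_edgeFinset.mpr hz.1, hcross.ne.symm,
    hcross⟩, Sym2.mem_mk_left _ _⟩

lemma disjoint_filter_mem_crossingEdges {i j : ℕ} (hij : i ≠ j) (hi : i < a.arcLen b)
    (hj : j < a.arcLen b) :
    Disjoint {e ∈ G.crossingEdges s(a, b) | a.arcPoint i ∈ e}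
      {e ∈ G.crossingEdges s(a, b) | a.arcPoint j ∈ e} := by
  have hin : i < n := (hi.trans (arcLen_lt a b))
  have hjn : j < n := (hj.trans (arcLen_lt a b))
  have hne : a.arcPoint i ≠ a.arcPoint j := fun h =>
    hij (by rw [← arcLen_arcPoint a hin, ← arcLen_arcPoint a hjn, h])
  rw [Finset.disjoint_left]
  intro e hei hej
  simp only [Finset.mem_filter] at hei hej
  rw [(Sym2.mem_and_mem_iff hne).mp ⟨hei.2, hej.2⟩] at hei
  have := arcLen_lt_of_sym2Cross (Finset.mem_filter.mp hei.1).2.2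
  rw [arcLen_arcPoint a hin, arcLen_arcPoint a hjn] at this
  omega

lemma IsShortestLongChord.sum_degree_le (hG : G.CrossingBounded k)
    (h : G.IsShortestLongChord m a b) :
    ∑ j ∈ Icc 1 (a.arcLen b - 1), G.degree (a.arcPoint j) ≤
      k + ∑ j ∈ Icc 1 (a.arcLen b - 1), (min j m + min (a.arcLen b - j) m) := by
  set g := a.arcLen b
  set X : ℕ → Finset (Sym2 (Fin n)) :=
    fun j => {e ∈ G.crossingEdges s(a, b) | a.arcPoint j ∈ e}
  have hsplit : ∀ j ∈ Icc 1 (g - 1),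
      G.degree (a.arcPoint j) ≤ #(X j) + (min j m + min (g - j) m) := by
    intro j hj
    rw [Finset.mem_Icc] at hj
    rw [← card_neighborFinset_eq_degree,
      ← Finset.card_filter_add_card_filter_not (p := fun z => a.arcLen z ≤ g)]
    simp only [not_le]
    have hin : #{z ∈ G.neighborFinset (a.arcPoint j) | a.arcLen z ≤ g} ≤
        min j m + min (g - j) m := h.card_neighbor_inside_le (by omega) (by omega)
    have hout : #{z ∈ G.neighborFinset (a.arcPoint j) | g < a.arcLen z} ≤ #(X j) :=
      card_neighbor_outside_le (by omega) (by omega)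
    omega
  have hcross : ∑ j ∈ Icc 1 (g - 1), #(X j) ≤ k := by
    rw [← Finset.card_biUnion fun i hi j hj hij => disjoint_filter_mem_crossingEdges hij
      (by simp only [Finset.coe_Icc, Set.mem_Icc] at hi; omega)
      (by simp only [Finset.coe_Icc, Set.mem_Icc] at hj; omega)]
    exact (Finset.card_le_card (Finset.biUnion_subset.mpr fun _ _ => Finset.filter_subset _ _)
      ).trans (hG _ (mem_edgeFinset.mpr h.1))
  calc _ ≤ ∑ j ∈ Icc 1 (g - 1), (#(X j) + (min j m + min (g - j) m)) :=
        Finset.sum_le_sum hsplit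
    _ ≤ _ := by rw [Finset.sum_add_distrib]; omega

lemma exists_adj_lt_chordLen {v : Fin n} (hv : 2 * m < G.degree v) :
    ∃ w, G.Adj v w ∧ m < v.chordLen w := by
  by_contra! hshort
  have hmaps : ∀ w ∈ G.neighborFinset v, v.arcLen w ∈ Icc 1 m ∪ Icc (n - m) (n - 1) := by
    intro w hw
    rw [mem_neighborFinset] at hw
    have h₁ := hshort w hw
    have h₂ := arcLen_add_arcLen hw.ne
    have h₃ := arcLen_pos hw.ne
    have h₄ := arcLen_pos hw.ne'
    rw [chordLen] at h₁
    simp only [Finset.mem_union, Finset.mem_Icc]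
    omega
  have := (Finset.card_le_card_of_injOn _ hmaps v.arcLen_injective.injOn).trans
    (Finset.card_union_le _ _)
  rw [card_neighborFinset_eq_degree, Nat.card_Icc, Nat.card_Icc] at this
  have := v.pos
  omega

lemma exists_isShortestLongChord (h : ∃ c d, G.Adj c d ∧ m < c.chordLen d) :
    ∃ a b, G.IsShortestLongChord m a b := by
  obtain ⟨c, d, hcd⟩ := h
  obtain ⟨⟨a, b⟩, hab, hmin⟩ := Finset.exists_min_image
    {p : Fin n × Fin n | G.Adj p.1 p.2 ∧ m < p.1.chordLen p.2} (fun p => p.1.chordLen p.2)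
    ⟨(c, d), by simpa using hcd⟩
  simp only [Finset.mem_filter, Finset.mem_univ, true_and, Prod.forall] at hab hmin
  have hmin' : ∀ x y, G.Adj x y → m < x.chordLen y → a.chordLen b ≤ x.chordLen y :=
    fun x y hxy hlong => hmin x y ⟨hxy, hlong⟩
  rcases le_total (a.arcLen b) (b.arcLen a) with hle | hle
  · have hab' : a.chordLen b = a.arcLen b := min_eq_left hle
    exact ⟨a, b, hab.1, hab' ▸ hab.2, hle, hab' ▸ hmin'⟩
  · have hba : a.chordLen b = b.arcLen a := min_eq_right hle
    exact ⟨b, a, hab.1.symm, hba ▸ hab.2, hle, hba ▸ hmin'⟩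

theorem CrossingBounded.mul_le_of_forall_le_degree (hG : G.CrossingBounded k) (hn : 0 < n)
    {d : ℕ} (hd : ∀ v, d ≤ G.degree v) (hm : 2 * m < d) : m * (d - 1 - m) ≤ k := by
  obtain ⟨w, hw⟩ := exists_adj_lt_chordLen (hm.trans_le (hd ⟨0, hn⟩))
  obtain ⟨a, b, h⟩ := exists_isShortestLongChord ⟨_, w, hw⟩
  have hsum := h.sum_degree_le hG
  have hdeg :
      (a.arcLen b - 1) * d ≤ ∑ j ∈ Icc 1 (a.arcLen b - 1), G.degree (a.arcPoint j) := by
    simpa using Finset.card_nsmul_le_sum (Icc 1 (a.arcLen b - 1))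
      (fun j => G.degree (a.arcPoint j)) d (fun j _ => hd _)
  have hmin := Nat.sum_Icc_min_add_min_add_mul_self h.2.1
  -- with `a.arcLen b - 1 = m + t` and `d = m + 1 + D`, the bounds combine to
  -- `m * D + t * (D + 1 - m) ≤ k`, and `m ≤ D`
  obtain ⟨t, ht⟩ : ∃ t, a.arcLen b - 1 = m + t :=
    ⟨a.arcLen b - 1 - m, by have := h.2.1; omega⟩
  obtain ⟨D, rfl⟩ : ∃ D, d = m + 1 + D := ⟨d - (m + 1), by omega⟩
  rw [ht] at hsum hdeg hmin
  rw [show m + 1 + D - 1 - m = D by omega]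
  nlinarith [Nat.mul_le_mul_left t (show m ≤ D by omega)]

theorem CrossingBounded.exists_degree_le (hG : G.CrossingBounded k) (hn : 0 < n) :
    ∃ v, G.degree v ≤ Nat.sqrt (4 * k + 1) + 1 := by
  set s := Nat.sqrt (4 * k + 1)
  by_contra! h
  have hle : (s + 1) / 2 * (s + 2 - 1 - (s + 1) / 2) ≤ k :=
    hG.mul_le_of_forall_le_degree hn h (by omega)
  have hlt : k < (s + 1) / 2 * (s + 1 - (s + 1) / 2) :=
    Nat.lt_div_two_mul_sub_div_two (Nat.lt_succ_sqrt _)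
  rw [show s + 2 - 1 = s + 1 by omega] at hle
  omega

theorem CrossingBounded.exists_card_adj_le (hG : G.CrossingBounded k) {s : Finset (Fin n)}
    (hs : s.Nonempty) : ∃ v ∈ s, #{w ∈ s | G.Adj v w} ≤ Nat.sqrt (4 * k + 1) + 1 := by
  set φ := s.orderEmbOfFin rfl
  obtain ⟨u, hu⟩ := (hG.comap φ.strictMono).exists_degree_le (Finset.card_pos.mpr hs)
  refine ⟨φ u, s.orderEmbOfFin_mem rfl u, le_of_eq_of_le ?_ hu⟩
  rw [← card_neighborFinset_eq_degree, ← Finset.card_map φ.toEmbedding]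
  congr 1
  ext w
  have hrange : w ∈ s ↔ w ∈ Set.range φ := by rw [Finset.range_orderEmbOfFin]; rfl
  simp only [Finset.mem_filter, Finset.mem_map, mem_neighborFinset, comap_adj, hrange]
  constructor
  · rintro ⟨⟨x, rfl⟩, hadj⟩
    exact ⟨x, hadj, rfl⟩
  · rintro ⟨x, hadj, rfl⟩
    exact ⟨⟨x, rfl⟩, hadj⟩

theorem CrossingBounded.colorable (hG : G.CrossingBounded k) :
    G.Colorable (Nat.sqrt (4 * k + 1) + 2) :=
  G.colorable_of_forall_exists_card_adj_lt _ fun _ hs => (hG.exists_card_adj_le hs).imp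
    fun _ ⟨hv, hdeg⟩ => ⟨hv, Nat.lt_succ_of_le hdeg⟩

end Counting

section Tightness

variable {n k : ℕ}

lemma card_crossingEdges_le (G : SimpleGraph (Fin n)) {a b : Fin n} (hab : a < b) :
    #(G.crossingEdges s(a, b)) ≤ (b - a - 1 : ℕ) * (n - (b + 1 - a) : ℕ) := by
  have hsub :
      G.crossingEdges s(a, b) ⊆ ((Ioo a b) ×ˢ (Icc a b)ᶜ).image (fun p => s(p.1, p.2)) := by
    intro f hf
    induction f using Sym2.ind with | _ c d =>
    have hcross := sym2Cross_mk_iff.mp (Finset.mem_filter.mp hf).2.2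
    rw [interleave_iff_val] at hcross
    have hab' : a.val < b.val := hab
    simp only [Finset.mem_image, Finset.mem_product, Finset.mem_Ioo, Finset.mem_compl,
      Finset.mem_Icc, Prod.exists, Fin.lt_def, Fin.le_def]
    by_cases hc : a.val < c.val ∧ c.val < b.val
    · exact ⟨c, d, ⟨hc, by omega⟩, rfl⟩
    · exact ⟨d, c, ⟨by omega, by omega⟩, Sym2.eq_swap⟩
  calc #(G.crossingEdges s(a, b)) ≤ #((Ioo a b) ×ˢ (Icc a b)ᶜ) :=
        (Finset.card_le_card hsub).trans Finset.card_image_le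
    _ = _ := by rw [Finset.card_product, Fin.card_Ioo, Finset.card_compl, Fin.card_Icc,
        Fintype.card_fin]

lemma crossingBounded_top (hn : n ≤ Nat.sqrt (4 * k + 1) + 2) :
    (⊤ : SimpleGraph (Fin n)).CrossingBounded k := by
  intro e he
  induction e using Sym2.ind with | _ a b =>
  have hab : a ≠ b := by simpa using he
  wlog hlt : a < b generalizing a b
  · rw [Sym2.eq_swap]
    exact this b a (by simpa [Sym2.eq_swap] using he) hab.symm (by omega)
  refine (card_crossingEdges_le _ hlt).trans (Nat.mul_le_of_add_le_sqrt ?_)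
  have : a.val < b.val := hlt
  omega

end Tightness

end SimpleGraph

/-- Every outer `k`-planar graph has chromatic number at most `⌊√(4k+1)⌋ + 2`,
and this bound is tight: the complete graph on `⌊√(4k+1)⌋ + 2` vertices is
outer `k`-planar. -/
theorem stmt6 (k : ℕ) :
    (∀ (V : Type) [Fintype V] [DecidableEq V] (G : SimpleGraph V),
      IsOuterKPlanar k G → G.chromaticNumber ≤ (Nat.sqrt (4 * k + 1) + 2 : ℕ)) ∧
    IsOuterKPlanar k (⊤ : SimpleGraph (Fin (Nat.sqrt (4 * k + 1) + 2))) := by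
  refine ⟨fun V _ _ G hG => ?_, ?_⟩
  · obtain ⟨σ, hσ⟩ := SimpleGraph.isOuterKPlanar_iff.mp hG
    exact (hσ.colorable.of_hom (SimpleGraph.Iso.map σ G).toHom).chromaticNumber_le
  · refine SimpleGraph.isOuterKPlanar_iff.mpr ⟨finCongr (Fintype.card_fin _).symm, ?_⟩
    rw [← SimpleGraph.comap_symm, show SimpleGraph.comap _ ⊤ = ⊤ from
      SimpleGraph.comap_top (Function.Embedding.injective _)]
    exact SimpleGraph.crossingBounded_top (by simp)
end

section
/- The complete bipartite graph K_{4,4} is outer 3-quasi-planar: there exists a cyclic ordering of its 8 vertices in which no three edges of K_{4,4} mutually cross. -/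
/-!
Place the vertices in the cyclic order a₁ a₂ b₁ b₂ a₃ a₄ b₃ b₄. Three pairwise crossing chords
have endpoints p₁ < ⋯ < p₆ paired as pᵢ pᵢ₊₃; if every chord joins the two sides, the word of
sides read along p₁ … p₆ has the form s₁ s₂ s₃ s̄₁ s̄₂ s̄₃, which changes side 2 or 6 times
cyclically. A subword of AABBAABB changes side at most 4 times, so the six endpoints would be
three consecutive a's followed by three consecutive b's; but three a's meet both blocks of a's,
and three b's meet both blocks of b's separating them.
-/

open Finset

open scoped Classical

instance Interleave.decidable {n : ℕ} (a b c d : Fin n) : Decidable (Interleave a b c d) := by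
  unfold Interleave; infer_instance

theorem Sym2Cross.interleave {n : ℕ} {a b c d : Fin n} (h : Sym2Cross s(a, b) s(c, d)) :
    Interleave a b c d := by
  obtain ⟨a', b', c', d', hab, hcd, h⟩ := h
  rw [Sym2.eq_iff] at hab hcd
  rcases hab with ⟨rfl, rfl⟩ | ⟨rfl, rfl⟩ <;> rcases hcd with ⟨rfl, rfl⟩ | ⟨rfl, rfl⟩ <;>
    simp_all only [Interleave, min_comm, max_comm]

theorem isOuterKQuasiPlanar_three_of_forall {V : Type*} [Fintype V] [DecidableEq V]
    {G : SimpleGraph V} (σ : V ≃ Fin (Fintype.card V))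
    (h : ∀ e ∈ G.edgeSet, ∀ f ∈ G.edgeSet, ∀ g ∈ G.edgeSet, e ≠ f → e ≠ g → f ≠ g →
      ¬(Sym2Cross (e.map σ) (f.map σ) ∧ Sym2Cross (e.map σ) (g.map σ) ∧
        Sym2Cross (f.map σ) (g.map σ))) :
    IsOuterKQuasiPlanar 3 G := by
  refine ⟨σ, fun S hS hcross ↦ ?_⟩
  by_contra! hcard
  obtain ⟨e, he, f, hf, g, hg, hef, heg, hfg⟩ := two_lt_card.mp hcard
  exact h e (hS he) f (hS hf) g (hS hg) hef heg hfg
    ⟨hcross e he f hf hef, hcross e he g hg heg, hcross f hf g hg hfg⟩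

def k44Placement : Fin 4 ⊕ Fin 4 ≃ Fin (Fintype.card (Fin 4 ⊕ Fin 4)) :=
  Equiv.trans
    { toFun := Sum.elim ![0, 1, 4, 5] ![2, 3, 6, 7]
      invFun := ![.inl 0, .inl 1, .inr 0, .inr 1, .inl 2, .inl 3, .inr 2, .inr 3]
      left_inv := by decide
      right_inv := by decide }
    (finCongr (by simp))

theorem k44Placement_not_three_interleave (x₁ y₁ x₂ y₂ x₃ y₃ : Fin 4) :
    ¬(Interleave (k44Placement (.inl x₁)) (k44Placement (.inr y₁))
        (k44Placement (.inl x₂)) (k44Placement (.inr y₂)) ∧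
      Interleave (k44Placement (.inl x₁)) (k44Placement (.inr y₁))
        (k44Placement (.inl x₃)) (k44Placement (.inr y₃)) ∧
      Interleave (k44Placement (.inl x₂)) (k44Placement (.inr y₂))
        (k44Placement (.inl x₃)) (k44Placement (.inr y₃))) := by
  revert x₁ y₁ x₂ y₂ x₃ y₃
  decide

/-- `K_{4,4}` is outer 3-quasi-planar. -/
theorem stmt18 : IsOuterKQuasiPlanar 3 (completeBipartiteGraph (Fin 4) (Fin 4)) := by
  refine isOuterKQuasiPlanar_three_of_forall k44Placement fun e he f hf g hg _ _ _ ↦ ?_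
  rw [SimpleGraph.edgeSet_completeBipartiteGraph] at he hf hg
  obtain ⟨⟨x₁, y₁⟩, rfl⟩ := he
  obtain ⟨⟨x₂, y₂⟩, rfl⟩ := hf
  obtain ⟨⟨x₃, y₃⟩, rfl⟩ := hg
  rintro ⟨h₁₂, h₁₃, h₂₃⟩
  exact k44Placement_not_three_interleave x₁ y₁ x₂ y₂ x₃ y₃
    ⟨h₁₂.interleave, h₁₃.interleave, h₂₃.interleave⟩
end
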